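/- arXiv:2101.03397 — 10 statements merged into one kernel-verified Lean document; each statement's English description precedes it below -/
import Mathlib

section
/- Let n ≥ 2, A ∈ M_n(ℂ), and let i ≠ j be indices in {1,…,n}. Then [B_i, B_j] = A_{ij}·E_{ij}(A+I) − A_{ji}·E_{ji}(A+I). Consequently, if A_{ij} = 0 and A_{ji} = 0 then B_i and B_j commute; and conversely, if A_{ii} ≠ −1, A_{jj} ≠ −1 and [B_i, B_j] = 0, then A_{ij} = 0 and A_{ji} = 0. -/
/-!
Since `E_k M E_l = M_{kl} E_{kl}`, the product `(E_k M)(E_l M)` collapses to `M_{kl} E_{kl} M`;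
with `M = A + I` this is the commutator formula. For the converse, `E_{ji} M` vanishes outside
row `j`, so the `(i, j)` entry of `[B_i, B_j]` is `A_{ij} (A_{jj} + 1)`, and symmetrically.
-/

namespace Matrix

variable {ι R : Type*} [Fintype ι] [DecidableEq ι]

theorem single_one_mul_mul_single_one_mul [Semiring R] (M : Matrix ι ι R) (k l : ι) :
    single k k (1 : R) * M * (single l l 1 * M) = M k l • (single k l 1 * M) := by
  rw [← Matrix.mul_assoc, single_mul_mul_single, ← smul_mul_assoc, smul_single, smul_eq_mul,
    one_mul, mul_one]

theorem commutator_single_one_mul_apply_of_ne [Ring R] (M : Matrix ι ι R) {k l : ι}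
    (hkl : k ≠ l) :
    (single k k (1 : R) * M * (single l l 1 * M) - single l l 1 * M * (single k k 1 * M) :
      Matrix ι ι R) k l
      = M k l * M l l := by
  rw [single_one_mul_mul_single_one_mul, single_one_mul_mul_single_one_mul, sub_apply,
    smul_apply, smul_apply, single_mul_apply_same, single_mul_apply_of_ne 1 l k k l hkl M,
    smul_eq_mul, smul_eq_mul, one_mul, mul_zero, sub_zero]

end Matrix

theorem stmt0_general {n : ℕ} (A : Matrix (Fin n) (Fin n) ℂ)
    (i j : Fin n) (hij : i ≠ j)
    (B : Fin n → Matrix (Fin n) (Fin n) ℂ)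
    (hB : ∀ k, B k = -(Matrix.single k k (1 : ℂ) * (A + 1))) :
    B i * B j - B j * B i
        = A i j • (Matrix.single i j (1 : ℂ) * (A + 1))
          - A j i • (Matrix.single j i (1 : ℂ) * (A + 1))
      ∧ (A i j = 0 → A j i = 0 → B i * B j = B j * B i)
      ∧ (A i i ≠ -1 → A j j ≠ -1 → B i * B j - B j * B i = 0 →
          A i j = 0 ∧ A j i = 0) := by
  have hB_mul : ∀ k l,
      B k * B l = Matrix.single k k 1 * (A + 1) * (Matrix.single l l 1 * (A + 1)) :=
    fun k l ↦ by rw [hB, hB, neg_mul_neg]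
  have commutator : B i * B j - B j * B i
      = A i j • (Matrix.single i j (1 : ℂ) * (A + 1))
        - A j i • (Matrix.single j i (1 : ℂ) * (A + 1)) := by
    rw [hB_mul, hB_mul, Matrix.single_one_mul_mul_single_one_mul,
      Matrix.single_one_mul_mul_single_one_mul, Matrix.add_apply, Matrix.add_apply,
      Matrix.one_apply_ne hij, Matrix.one_apply_ne hij.symm, add_zero, add_zero]
  have commutator_apply : ∀ {k l}, k ≠ l →
      (B k * B l - B l * B k) k l = A k l * (A l l + 1) := by
    intro k l hkl
    rw [hB_mul, hB_mul, Matrix.commutator_single_one_mul_apply_of_ne _ hkl, Matrix.add_apply,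
      Matrix.add_apply, Matrix.one_apply_ne hkl, Matrix.one_apply_eq, add_zero]
  refine ⟨commutator, fun hij0 hji0 ↦ ?_, fun hii hjj hcomm ↦ ?_⟩
  · rw [← sub_eq_zero, commutator, hij0, hji0, zero_smul, zero_smul, sub_zero]
  · have hcomm' : B j * B i - B i * B j = 0 := by rw [← neg_sub, hcomm, neg_zero]
    have entry_ij := commutator_apply hij
    have entry_ji := commutator_apply hij.symm
    rw [hcomm, Matrix.zero_apply, eq_comm, mul_eq_zero] at entry_ij
    rw [hcomm', Matrix.zero_apply, eq_comm, mul_eq_zero] at entry_ji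
    exact ⟨entry_ij.resolve_right (fun h ↦ hjj (eq_neg_of_add_eq_zero_left h)),
      entry_ji.resolve_right (fun h ↦ hii (eq_neg_of_add_eq_zero_left h))⟩

/-- For `A ∈ Mₙ(ℂ)`, `Bₖ := -Eₖ(A+I)`. For `i ≠ j`:
`[Bᵢ, Bⱼ] = A_{ij}·E_{ij}(A+I) − A_{ji}·E_{ji}(A+I)`; consequently if
`A_{ij} = A_{ji} = 0` then `Bᵢ, Bⱼ` commute, and conversely if
`A_{ii} ≠ -1`, `A_{jj} ≠ -1` and `[Bᵢ,Bⱼ] = 0` then `A_{ij} = A_{ji} = 0`. -/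
theorem stmt0 {n : ℕ} (hn : 2 ≤ n) (A : Matrix (Fin n) (Fin n) ℂ)
    (i j : Fin n) (hij : i ≠ j)
    (B : Fin n → Matrix (Fin n) (Fin n) ℂ)
    (hB : ∀ k, B k = -(Matrix.single k k (1 : ℂ) * (A + 1))) :
    B i * B j - B j * B i
        = A i j • (Matrix.single i j (1 : ℂ) * (A + 1))
          - A j i • (Matrix.single j i (1 : ℂ) * (A + 1))
      ∧ (A i j = 0 → A j i = 0 → B i * B j = B j * B i)
      ∧ (A i i ≠ -1 → A j j ≠ -1 → B i * B j - B j * B i = 0 →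
          A i j = 0 ∧ A j i = 0) :=
  stmt0_general A i j hij B hB
end

section
/- Let A ∈ M_n(ℂ) and let u ∈ ℂ^n have pairwise distinct coordinates. Then: (i) for all i, j ∈ {1,…,n}, the (i,i) entry of [ω_j(u,A), A] is zero; (ii) for pairwise distinct indices i, ℓ, j, the (i,ℓ) entry of [ω_j(u,A), A] equals (u_i − u_ℓ)·A_{ij}·A_{jℓ} / ((u_i − u_j)(u_ℓ − u_j)). -/
/-- `ω_j(u,A)`: the matrix whose `(a,b)` entry is `A_{ab}(δ_{aj} − δ_{bj})/(u_a − u_b)`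
for `a ≠ b`, and whose diagonal entries are `0`. -/
noncomputable def omegaMat {n : ℕ} (u : Fin n → ℂ) (A : Matrix (Fin n) (Fin n) ℂ)
    (j : Fin n) : Matrix (Fin n) (Fin n) ℂ :=
  Matrix.of fun a b =>
    if a = b then 0
    else A a b * ((if a = j then (1 : ℂ) else 0) - (if b = j then (1 : ℂ) else 0)) / (u a - u b)

/-- (i) the diagonal entries of `[ω_j(u,A), A]` vanish; (ii) for pairwise
distinct `i, ℓ, j`, the `(i,ℓ)` entry of `[ω_j(u,A), A]` equals
`(uᵢ − u_ℓ)·A_{ij}·A_{jℓ}/((uᵢ − u_j)(u_ℓ − u_j))`. -/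
theorem stmt2 {n : ℕ} (A : Matrix (Fin n) (Fin n) ℂ) (u : Fin n → ℂ)
    (hu : ∀ a b : Fin n, a ≠ b → u a ≠ u b) :
    (∀ i j : Fin n, (omegaMat u A j * A - A * omegaMat u A j) i i = 0)
      ∧ (∀ i l j : Fin n, i ≠ l → i ≠ j → l ≠ j →
          (omegaMat u A j * A - A * omegaMat u A j) i l
            = (u i - u l) * A i j * A j l / ((u i - u j) * (u l - u j))) := by
  constructor
  · intro i j
    simp only [Matrix.sub_apply, Matrix.mul_apply, ← Finset.sum_sub_distrib]
    apply Finset.sum_eq_zero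
    intro b _
    by_cases hib : i = b
    · subst hib; simp [omegaMat]
    · have h : u i - u b ≠ 0 := sub_ne_zero.mpr (hu i b hib)
      have h' : u b - u i ≠ 0 := sub_ne_zero.mpr (hu b i (Ne.symm hib))
      simp only [omegaMat, Matrix.of_apply, hib, Ne.symm hib, if_false]
      field_simp
      ring
  · intro i l j hil hij hlj
    simp only [Matrix.sub_apply, Matrix.mul_apply, ← Finset.sum_sub_distrib]
    rw [Finset.sum_eq_single j]
    · have h1 : u i - u j ≠ 0 := sub_ne_zero.mpr (hu i j hij)
      have h2 : u l - u j ≠ 0 := sub_ne_zero.mpr (hu l j hlj)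
      have h3 : u j - u l ≠ 0 := sub_ne_zero.mpr (hu j l (Ne.symm hlj))
      simp only [omegaMat, Matrix.of_apply, hij, hlj, Ne.symm hlj, Ne.symm hij, hil,
        if_false, if_pos rfl, if_true]
      field_simp
      ring
    · intro b _ hbj
      simp [omegaMat, hbj, hij, hlj]
    · simp
end

section
/- Let U ⊆ ℂ^n be open and connected with u_a ≠ u_b for every u ∈ U and all a ≠ b, and let A : U → M_n(ℂ) be differentiable with ∂_j A(u) = [ω_j(u,A(u)), A(u)] on U for every j = 1,…,n. Then every diagonal entry u ↦ A_{ii}(u) is constant on U; in particular the diagonal matrix B := diag(A_{11}(u),…,A_{nn}(u)) is constant. -/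
/-- The complex partial derivative `∂_j f` in the `j`-th coordinate. -/
noncomputable def pd {n : ℕ} (j : Fin n) (f : (Fin n → ℂ) → ℂ) (u : Fin n → ℂ) : ℂ :=
  fderiv ℂ f u (Pi.single j 1)

/-- Entrywise partial derivative `∂_j A` of a matrix-valued map. -/
noncomputable def mpd {n : ℕ} (j : Fin n) (A : (Fin n → ℂ) → Matrix (Fin n) (Fin n) ℂ)
    (u : Fin n → ℂ) : Matrix (Fin n) (Fin n) ℂ :=
  Matrix.of fun a b => pd j (fun v => A v a b) u

/-- Diagonal entries of the commutator `[ω_j(u,A), A]` vanish. -/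
lemma omega_comm_diag {n : ℕ} (u : Fin n → ℂ) (A : Matrix (Fin n) (Fin n) ℂ)
    (j i : Fin n) :
    (omegaMat u A j * A - A * omegaMat u A j) i i = 0 := by
  have : (omegaMat u A j * A) i i = (A * omegaMat u A j) i i := by
    simp only [Matrix.mul_apply]
    refine Finset.sum_congr rfl fun k _ => ?_
    by_cases hk : i = k
    · subst hk
      simp [omegaMat]
    · have hk' : ¬ k = i := fun h => hk h.symm
      simp only [omegaMat, Matrix.of_apply, if_neg hk, if_neg hk']
      have hneg : ((if k = j then (1:ℂ) else 0) - (if i = j then (1:ℂ) else 0))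
          = -(((if i = j then (1:ℂ) else 0) - (if k = j then (1:ℂ) else 0))) := by ring
      have hneg2 : u k - u i = -(u i - u k) := by ring
      rw [hneg, hneg2, mul_neg, neg_div_neg_eq]
      ring
    
  simp [Matrix.sub_apply, this]

/-- A function on an open preconnected set with zero `fderiv` at every point is constant. -/
lemma const_of_fderiv_zero {E F : Type*} [NormedAddCommGroup E] [NormedSpace ℂ E]
    [NormedAddCommGroup F] [NormedSpace ℂ F]
    {U : Set E} (hUopen : IsOpen U) (hUconn : IsPreconnected U)
    {f : E → F} (hdiff : ∀ x ∈ U, DifferentiableAt ℂ f x)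
    (hzero : ∀ x ∈ U, fderiv ℂ f x = 0)
    {u v : E} (hu : u ∈ U) (hv : v ∈ U) : f u = f v := by
  have : PreconnectedSpace U := Subtype.preconnectedSpace hUconn
  have hloc : IsLocallyConstant (fun x : U => f x) := by
    rw [IsLocallyConstant.iff_exists_open]
    rintro ⟨x, hx⟩
    obtain ⟨ε, hε, hball⟩ := Metric.isOpen_iff.1 hUopen x hx
    refine ⟨Subtype.val ⁻¹' Metric.ball x ε, isOpen_induced (Metric.isOpen_ball), by simpa, ?_⟩
    rintro ⟨y, hy⟩ hyb
    have hconv : Convex ℝ (Metric.ball x ε) := convex_ball x ε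
    have hdf : DifferentiableOn ℂ f (Metric.ball x ε) := fun z hz =>
      (hdiff z (hball hz)).differentiableWithinAt
    refine hconv.is_const_of_fderivWithin_eq_zero hdf (fun z hz => ?_) hyb
      (Metric.mem_ball_self hε)
    rw [fderivWithin_of_isOpen Metric.isOpen_ball hz]
    exact hzero z (hball hz)
  have := congrFun (hloc.eq_const ⟨u, hu⟩) ⟨v, hv⟩
  exact (by simpa using this : f v = f u).symm

/-- if `A` is differentiable on an open connected `U ⊆ ℂⁿ` with pairwise
distinct coordinates and satisfies `∂_j A = [ω_j(u,A), A]` for all `j`, then every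
diagonal entry of `A` is constant on `U`. -/
theorem stmt3 {n : ℕ} (U : Set (Fin n → ℂ)) (hUopen : IsOpen U) (hUconn : IsConnected U)
    (hdist : ∀ u ∈ U, ∀ a b : Fin n, a ≠ b → u a ≠ u b)
    (A : (Fin n → ℂ) → Matrix (Fin n) (Fin n) ℂ)
    (hdiff : ∀ a b : Fin n, DifferentiableOn ℂ (fun u => A u a b) U)
    (hA : ∀ u ∈ U, ∀ j : Fin n,
      mpd j A u = omegaMat u (A u) j * A u - A u * omegaMat u (A u) j) :
    ∀ u ∈ U, ∀ v ∈ U, ∀ i : Fin n, A u i i = A v i i := by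
  intro u hu v hv i
  have hdAt : ∀ w ∈ U, DifferentiableAt ℂ (fun x => A x i i) w := fun w hw =>
    (hdiff i i).differentiableAt (hUopen.mem_nhds hw)
  refine const_of_fderiv_zero hUopen hUconn.isPreconnected hdAt (fun w hw => ?_) hu hv
  have hzero : ∀ j : Fin n, fderiv ℂ (fun x => A x i i) w (Pi.single j 1) = 0 := by
    intro j
    have h1 : mpd j A w i i
        = (omegaMat w (A w) j * A w - A w * omegaMat w (A w) j) i i := by
      rw [hA w hw j]
    rw [omega_comm_diag] at h1
    exact h1
  ext x
  have hx : x = ∑ j : Fin n, x j • (Pi.single j 1 : Fin n → ℂ) := by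
    funext k
    simp [Finset.sum_apply, Pi.single_apply, Finset.sum_ite_eq']
  rw [hx]
  simp [map_sum, (fderiv ℂ (fun x => A x i i) w).map_smul, hzero]
end

section
/- Let A ∈ M_n(ℂ), let u ∈ ℂ^n have pairwise distinct coordinates, and let i ≠ k be indices in {1,…,n}. Setting 𝒜 := −(A + I) and B_m := E_m 𝒜 for m = 1,…,n, one has the matrix identity E_k·[ω_i(u,A), 𝒜] = [B_i, B_k]/(u_i − u_k) + [ω_i(u,A), B_k]. -/
open Matrix

namespace omegaMat

variable {n : ℕ} (u : Fin n → ℂ) (A : Matrix (Fin n) (Fin n) ℂ) {i k : Fin n}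

theorem apply_of_ne {j a b : Fin n} (ha : a ≠ j) (hb : b ≠ j) : omegaMat u A j a b = 0 := by
  simp [omegaMat, ha, hb]

theorem apply_left {j b : Fin n} (hb : b ≠ j) :
    omegaMat u A j j b = (u j - u b)⁻¹ * A j b := by
  simp [omegaMat, hb, hb.symm, div_eq_inv_mul, mul_comm]

theorem apply_right {j a : Fin n} (ha : a ≠ j) :
    omegaMat u A j a j = (u j - u a)⁻¹ * A a j := by
  rw [omegaMat, of_apply, if_neg ha, if_neg ha, if_pos rfl, ← neg_sub (u j) (u a), div_neg]
  ring

theorem single_mul (hik : i ≠ k) :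
    single k k (1 : ℂ) * omegaMat u A i = (u i - u k)⁻¹ • single k i (A k i) := by
  ext a b
  rcases eq_or_ne a k with rfl | ha
  · rcases eq_or_ne b i with rfl | hb
    · simp [apply_right u A hik.symm]
    · simp [apply_of_ne u A hik.symm hb, hb.symm]
  · simp [ha, ha.symm]

theorem mul_single (hik : i ≠ k) :
    omegaMat u A i * single k k (1 : ℂ) = (u i - u k)⁻¹ • single i k (A i k) := by
  ext a b
  rcases eq_or_ne b k with rfl | hb
  · rcases eq_or_ne a i with rfl | ha
    · simp [apply_left u A hik.symm]
    · simp [apply_of_ne u A ha hik.symm, ha.symm]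
  · simp [hb, hb.symm]

theorem single_mul_sub_mul_single (hik : i ≠ k) :
    single k k (1 : ℂ) * omegaMat u A i - omegaMat u A i * single k k (1 : ℂ)
      = (u i - u k)⁻¹ • (single i i (1 : ℂ) * -(A + 1) * single k k (1 : ℂ)
          - single k k (1 : ℂ) * -(A + 1) * single i i (1 : ℂ)) := by
  rw [single_mul u A hik, mul_single u A hik, single_mul_mul_single, single_mul_mul_single]
  simp only [one_mul, mul_one, Matrix.neg_apply, Matrix.add_apply, one_apply_ne hik,
    one_apply_ne hik.symm, add_zero, ← single_neg, smul_sub, smul_neg]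
  abel

end omegaMat

theorem stmt4_general {n : ℕ} (A : Matrix (Fin n) (Fin n) ℂ) (u : Fin n → ℂ)
    (i k : Fin n) (hik : i ≠ k)
    (𝒜 : Matrix (Fin n) (Fin n) ℂ) (h𝒜 : 𝒜 = -(A + 1))
    (B : Fin n → Matrix (Fin n) (Fin n) ℂ)
    (hB : ∀ m, B m = Matrix.single m m (1 : ℂ) * 𝒜) :
    Matrix.single k k (1 : ℂ) * (omegaMat u A i * 𝒜 - 𝒜 * omegaMat u A i)
      = (u i - u k)⁻¹ • (B i * B k - B k * B i)
        + (omegaMat u A i * B k - B k * omegaMat u A i) := by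
  have key := eq_add_of_sub_eq' (omegaMat.single_mul_sub_mul_single u A hik)
  rw [← h𝒜] at key
  rw [hB i, hB k]
  calc single k k 1 * (omegaMat u A i * 𝒜 - 𝒜 * omegaMat u A i)
      = single k k 1 * omegaMat u A i * 𝒜 - single k k 1 * 𝒜 * omegaMat u A i := by
        simp only [mul_sub, mul_assoc]
    _ = _ := by
        rw [key]
        simp only [add_mul, sub_mul, smul_mul, mul_assoc]
        abel

/-- with `𝒜 := −(A+I)` and `B_m := E_m 𝒜`, for `i ≠ k` one has
`E_k·[ω_i(u,A), 𝒜] = [B_i, B_k]/(u_i − u_k) + [ω_i(u,A), B_k]`. -/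
theorem stmt4 {n : ℕ} (A : Matrix (Fin n) (Fin n) ℂ) (u : Fin n → ℂ)
    (hu : ∀ a b : Fin n, a ≠ b → u a ≠ u b) (i k : Fin n) (hik : i ≠ k)
    (𝒜 : Matrix (Fin n) (Fin n) ℂ) (h𝒜 : 𝒜 = -(A + 1))
    (B : Fin n → Matrix (Fin n) (Fin n) ℂ)
    (hB : ∀ m, B m = Matrix.single m m (1 : ℂ) * 𝒜) :
    Matrix.single k k (1 : ℂ) * (omegaMat u A i * 𝒜 - 𝒜 * omegaMat u A i)
      = (u i - u k)⁻¹ • (B i * B k - B k * B i)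
        + (omegaMat u A i * B k - B k * omegaMat u A i) :=
  stmt4_general A u i k hik 𝒜 h𝒜 B hB
end

section
/- Let U ⊆ ℂ^n be open with u_a ≠ u_b for every u ∈ U and all a ≠ b, and let A : U → M_n(ℂ) be differentiable. Define B_k(u) := −E_k(A(u) + I) for k = 1,…,n. Then the following two systems of equations are equivalent on U: (a) ∂_i A = [ω_i(u,A), A] for every i = 1,…,n; (b) the non-normalized Schlesinger equations with coefficients γ_i = ω_i(u,A) hold, namely ∂_i B_k = [B_i, B_k]/(u_i − u_k) + [ω_i(u,A), B_k] for all i ≠ k, and ∂_i B_i = −∑_{k≠i} [B_i, B_k]/(u_i − u_k) + [ω_i(u,A), B_i] for every i. -/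
/-!
Write `E_k` for the diagonal matrix unit, `X = A + 1`, so `B_k = -E_k X`. For `i ≠ k`,
`[B_i, B_k] = (E_i A E_k - E_k A E_i) X = (u_i - u_k) [ω_i, E_k] X`, and summing over `k ≠ i`
with `∑ E_k = 1` gives `-∑_{k ≠ i} [B_i, B_k] / (u_i - u_k) = [ω_i, E_i] X`. Hence both
Schlesinger equations read `∂_i B_k = [ω_i, E_k] X + [ω_i, B_k] = -E_k [ω_i, A]`. Since
`∂_i B_k = -E_k ∂_i A` and a matrix is determined by its rows `E_k M`, this is `∂_i A = [ω_i, A]`.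
-/

open Matrix Finset

section SingleMatrix

variable {ι R : Type*} [Fintype ι] [DecidableEq ι]

theorem Matrix.mul_single_one_apply [Semiring R] (M : Matrix ι ι R) (k a b : ι) :
    (M * single k k (1 : R)) a b = if b = k then M a k else 0 := by
  split_ifs with h
  · subst h; simp
  · simp [h]

theorem Matrix.single_one_mul_apply [Semiring R] (M : Matrix ι ι R) (k a b : ι) :
    (single k k (1 : R) * M) a b = if a = k then M k b else 0 := by
  split_ifs with h
  · subst h; simp
  · simp [h]

theorem Matrix.forall_single_mul_eq_iff [Semiring R] {M N : Matrix ι ι R} :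
    (∀ k, single k k (1 : R) * M = single k k 1 * N) ↔ M = N := by
  refine ⟨fun h => ?_, fun h _ => h ▸ rfl⟩
  rw [← one_mul M, ← one_mul N, ← sum_single_one, Finset.sum_mul, Finset.sum_mul]
  exact Finset.sum_congr rfl fun k _ => h k

theorem Matrix.sum_erase_commutator_single [Ring R] (γ : Matrix ι ι R) (i : ι) :
    ∑ k ∈ univ.erase i, (γ * single k k 1 - single k k 1 * γ)
      = -(γ * single i i 1 - single i i 1 * γ) := by
  have htotal : ∑ k, (γ * single k k (1 : R) - single k k 1 * γ) = 0 := by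
    rw [Finset.sum_sub_distrib, ← Finset.mul_sum, ← Finset.sum_mul, sum_single_one, mul_one,
      one_mul, sub_self]
  rw [← Finset.add_sum_erase _ _ (mem_univ i)] at htotal
  exact eq_neg_of_add_eq_zero_right htotal

theorem Matrix.neg_single_mul_commutator [Ring R] (γ M : Matrix ι ι R) (k : ι) :
    -(single k k 1 * (γ * M - M * γ))
      = (γ * single k k 1 - single k k 1 * γ) * (M + 1)
        + (γ * -(single k k 1 * (M + 1)) - -(single k k 1 * (M + 1)) * γ) := by
  noncomm_ring

theorem Matrix.commutator_neg_single_mul_add_one [Ring R] (M : Matrix ι ι R) {i k : ι}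
    (hik : i ≠ k) :
    -(single i i 1 * (M + 1)) * -(single k k 1 * (M + 1))
        - -(single k k 1 * (M + 1)) * -(single i i 1 * (M + 1))
      = (single i i 1 * M * single k k 1 - single k k 1 * M * single i i 1) * (M + 1) := by
  simp only [neg_mul_neg, ← Matrix.mul_assoc, ← Matrix.sub_mul, single_mul_mul_single,
    add_apply, one_apply_ne hik, one_apply_ne hik.symm, add_zero]

end SingleMatrix

section Schlesinger

variable {n : ℕ}

theorem mpd_neg_single_mul_add_one (A : (Fin n → ℂ) → Matrix (Fin n) (Fin n) ℂ) (i k : Fin n)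
    (u : Fin n → ℂ) :
    mpd i (fun v => -(single k k (1 : ℂ) * (A v + 1))) u = -(single k k 1 * mpd i A u) := by
  ext a b
  by_cases hak : a = k
  · subst hak
    simp [mpd, pd, fderiv_fun_neg, fderiv_add_const]
  · simp [mpd, pd, hak]

theorem omegaMat_commutator_single (u : Fin n → ℂ) (A : Matrix (Fin n) (Fin n) ℂ) {i k : Fin n}
    (hik : i ≠ k) (hu : u i ≠ u k) :
    omegaMat u A i * single k k 1 - single k k 1 * omegaMat u A i
      = (u i - u k)⁻¹ • (single i i 1 * A * single k k 1 - single k k 1 * A * single i i 1) := by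
  ext a b
  simp only [Matrix.sub_apply, Matrix.smul_apply, mul_single_one_apply, single_one_mul_apply,
    omegaMat, of_apply]
  by_cases hb : b = k <;> by_cases ha : a = k <;> by_cases hai : a = i <;> by_cases hbi : b = i <;>
    simp_all
  all_goals field_simp
  ring

variable (u : Fin n → ℂ) (A : Matrix (Fin n) (Fin n) ℂ)

theorem schlesinger_offdiag_term {i k : Fin n} (hik : i ≠ k) (hu : u i ≠ u k) :
    (u i - u k)⁻¹ • (-(single i i 1 * (A + 1)) * -(single k k 1 * (A + 1))
        - -(single k k 1 * (A + 1)) * -(single i i 1 * (A + 1)))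
      = (omegaMat u A i * single k k 1 - single k k 1 * omegaMat u A i) * (A + 1) := by
  rw [commutator_neg_single_mul_add_one A hik, omegaMat_commutator_single u A hik hu,
    smul_mul_assoc]

theorem schlesinger_diag_term {i : Fin n} (hu : ∀ k, i ≠ k → u i ≠ u k) :
    -∑ k ∈ univ.erase i, (u i - u k)⁻¹ • (-(single i i 1 * (A + 1)) * -(single k k 1 * (A + 1))
        - -(single k k 1 * (A + 1)) * -(single i i 1 * (A + 1)))
      = (omegaMat u A i * single i i 1 - single i i 1 * omegaMat u A i) * (A + 1) := by
  rw [Finset.sum_congr rfl fun k hk =>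
      schlesinger_offdiag_term u A (ne_of_mem_erase hk).symm (hu k (ne_of_mem_erase hk).symm),
    ← Finset.sum_mul, sum_erase_commutator_single, neg_mul, neg_neg]

end Schlesinger

theorem stmt5_general {n : ℕ} (U : Set (Fin n → ℂ))
    (hdist : ∀ u ∈ U, ∀ a b : Fin n, a ≠ b → u a ≠ u b)
    (A : (Fin n → ℂ) → Matrix (Fin n) (Fin n) ℂ)
    (B : Fin n → (Fin n → ℂ) → Matrix (Fin n) (Fin n) ℂ)
    (hB : ∀ k u, B k u = -(Matrix.single k k (1 : ℂ) * (A u + 1))) :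
    (∀ u ∈ U, ∀ i : Fin n,
        mpd i A u = omegaMat u (A u) i * A u - A u * omegaMat u (A u) i)
    ↔
    (∀ u ∈ U,
      (∀ i k : Fin n, i ≠ k →
        mpd i (B k) u
          = (u i - u k)⁻¹ • (B i u * B k u - B k u * B i u)
            + (omegaMat u (A u) i * B k u - B k u * omegaMat u (A u) i))
      ∧ (∀ i : Fin n,
        mpd i (B i) u
          = -(∑ k ∈ Finset.univ.erase i,
                (u i - u k)⁻¹ • (B i u * B k u - B k u * B i u))
            + (omegaMat u (A u) i * B i u - B i u * omegaMat u (A u) i))) := by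
  obtain rfl : B = fun k v => -(single k k (1 : ℂ) * (A v + 1)) := funext₂ hB
  refine forall₂_congr fun u hu => ?_
  simp only [mpd_neg_single_mul_add_one]
  calc _ ↔ ∀ i k, -(single k k 1 * mpd i A u)
          = -(single k k 1 * (omegaMat u (A u) i * A u - A u * omegaMat u (A u) i)) := by
        simp only [neg_inj, forall_single_mul_eq_iff]
    _ ↔ _ := by
        simp only [neg_single_mul_commutator]
        refine ⟨fun h => ⟨fun i k hik => ?_, fun i => ?_⟩, fun ⟨hoff, hdiag⟩ i k => ?_⟩
        · rw [schlesinger_offdiag_term u (A u) hik (hdist u hu i k hik)]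
          exact h i k
        · rw [schlesinger_diag_term u (A u) (hdist u hu i)]
          exact h i i
        · rcases eq_or_ne i k with rfl | hik
          · rw [← schlesinger_diag_term u (A u) (hdist u hu i)]
            exact hdiag i
          · rw [← schlesinger_offdiag_term u (A u) hik (hdist u hu i k hik)]
            exact hoff i k hik

/-- with `B_k(u) := −E_k(A(u)+I)`, the system
`∂_i A = [ω_i(u,A), A]` (for all `i`) is equivalent on `U` to the non-normalized
Schlesinger equations with coefficients `γ_i = ω_i(u,A)`. -/
theorem stmt5 {n : ℕ} (U : Set (Fin n → ℂ)) (hUopen : IsOpen U)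
    (hdist : ∀ u ∈ U, ∀ a b : Fin n, a ≠ b → u a ≠ u b)
    (A : (Fin n → ℂ) → Matrix (Fin n) (Fin n) ℂ)
    (hdiff : ∀ a b : Fin n, DifferentiableOn ℂ (fun u => A u a b) U)
    (B : Fin n → (Fin n → ℂ) → Matrix (Fin n) (Fin n) ℂ)
    (hB : ∀ k u, B k u = -(Matrix.single k k (1 : ℂ) * (A u + 1))) :
    (∀ u ∈ U, ∀ i : Fin n,
        mpd i A u = omegaMat u (A u) i * A u - A u * omegaMat u (A u) i)
    ↔
    (∀ u ∈ U,
      (∀ i k : Fin n, i ≠ k →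
        mpd i (B k) u
          = (u i - u k)⁻¹ • (B i u * B k u - B k u * B i u)
            + (omegaMat u (A u) i * B k u - B k u * omegaMat u (A u) i))
      ∧ (∀ i : Fin n,
        mpd i (B i) u
          = -(∑ k ∈ Finset.univ.erase i,
                (u i - u k)⁻¹ • (B i u * B k u - B k u * B i u))
            + (omegaMat u (A u) i * B i u - B i u * omegaMat u (A u) i))) :=
  stmt5_general U hdist A B hB
end

section
/- Let U ⊆ ℂ^n be open with u_a ≠ u_b for every u ∈ U and all a ≠ b, and let A : U → M_n(ℂ) be differentiable with ∂_j A(u) = [ω_j(u,A(u)), A(u)] on U for every j = 1,…,n. Then the maps u ↦ ω_j(u,A(u)) are differentiable and satisfy the zero-curvature relations ∂_i ω_k(u,A(u)) − ∂_k ω_i(u,A(u)) = [ω_i(u,A(u)), ω_k(u,A(u))] on U for all i, k ∈ {1,…,n}. -/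
section PartialDeriv

variable {n : ℕ} {f g : (Fin n → ℂ) → ℂ} {u : Fin n → ℂ}

-- Mathlib's quotient rule is for functions of one variable, so partial derivatives are
-- computed along coordinate lines.
lemma hasDerivAt_comp_add_smul_single (hf : DifferentiableAt ℂ f u) (j : Fin n) :
    HasDerivAt (fun t : ℂ => f (u + t • Pi.single j 1)) (pd j f u) 0 := by
  have hline : HasDerivAt (fun t : ℂ => u + t • Pi.single j (1 : ℂ)) (Pi.single j 1) 0 := by
    simpa using ((hasDerivAt_id (0 : ℂ)).smul_const (Pi.single j (1 : ℂ))).const_add u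
  exact hf.hasFDerivAt.comp_hasDerivAt_of_eq 0 hline (by simp)

lemma pd_div (hf : DifferentiableAt ℂ f u) (hg : DifferentiableAt ℂ g u) (hgu : g u ≠ 0)
    (j : Fin n) :
    pd j (fun v => f v / g v) u = (pd j f u * g u - f u * pd j g u) / g u ^ 2 := by
  have hfg : DifferentiableAt ℂ (fun v => f v / g v) u := by
    simpa only [div_eq_mul_inv] using hf.fun_mul (hg.fun_inv hgu)
  refine (hasDerivAt_comp_add_smul_single hfg j).unique ?_
  simpa using (hasDerivAt_comp_add_smul_single hf j).fun_div
    (hasDerivAt_comp_add_smul_single hg j) (by simpa using hgu)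

lemma pd_mul_const (hf : DifferentiableAt ℂ f u) (c : ℂ) (j : Fin n) :
    pd j (fun v => f v * c) u = pd j f u * c := by
  rw [pd, pd, fderiv_mul_const hf]
  exact mul_comm _ _

lemma pd_sub_apply (a b j : Fin n) :
    pd j (fun v => v a - v b) u =
      (if a = j then (1 : ℂ) else 0) - (if b = j then (1 : ℂ) else 0) := by
  rw [pd, ((hasFDerivAt_apply a u).fun_sub (hasFDerivAt_apply b u)).fderiv]
  simp [Pi.single_apply]

end PartialDeriv

section Omega

variable {n : ℕ}

@[simp]
lemma omegaMat_apply_self (u : Fin n → ℂ) (w : Matrix (Fin n) (Fin n) ℂ) (j a : Fin n) :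
    omegaMat u w j a a = 0 := by
  simp [omegaMat]

lemma omegaMat_apply_of_ne (u : Fin n → ℂ) (w : Matrix (Fin n) (Fin n) ℂ) (j : Fin n)
    {a b : Fin n} (hab : a ≠ b) :
    omegaMat u w j a b =
      w a b * ((if a = j then (1 : ℂ) else 0) - (if b = j then (1 : ℂ) else 0)) / (u a - u b) := by
  simp [omegaMat, hab]

lemma differentiableOn_omegaMat_apply {U : Set (Fin n → ℂ)}
    {A : (Fin n → ℂ) → Matrix (Fin n) (Fin n) ℂ}
    (hdist : ∀ u ∈ U, ∀ a b : Fin n, a ≠ b → u a ≠ u b)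
    (hdiff : ∀ a b : Fin n, DifferentiableOn ℂ (fun u => A u a b) U) (j a b : Fin n) :
    DifferentiableOn ℂ (fun u => omegaMat u (A u) j a b) U := by
  by_cases hab : a = b
  · subst hab
    simp only [omegaMat_apply_self]
    exact differentiableOn_const 0
  · simp only [omegaMat_apply_of_ne _ _ _ hab, div_eq_mul_inv]
    exact ((hdiff a b).mul_const _).fun_mul <|
      (by fun_prop : DifferentiableOn ℂ (fun u : Fin n → ℂ => u a - u b) U).fun_inv
        fun u hu => sub_ne_zero.mpr (hdist u hu a b hab)

variable {A : (Fin n → ℂ) → Matrix (Fin n) (Fin n) ℂ} {u : Fin n → ℂ} {a b : Fin n}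

lemma pd_omegaMat_apply_of_ne (hA : DifferentiableAt ℂ (fun v => A v a b) u) (hu : u a ≠ u b)
    (i k : Fin n) :
    pd i (fun v => omegaMat v (A v) k a b) u =
      (mpd i A u a b * ((if a = k then (1 : ℂ) else 0) - (if b = k then (1 : ℂ) else 0))
          * (u a - u b)
        - A u a b * ((if a = k then (1 : ℂ) else 0) - (if b = k then (1 : ℂ) else 0))
          * ((if a = i then (1 : ℂ) else 0) - (if b = i then (1 : ℂ) else 0)))
        / (u a - u b) ^ 2 := by
  have hab : a ≠ b := fun h => hu (congrArg u h)
  simp only [omegaMat_apply_of_ne _ _ _ hab]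
  rw [pd_div (hA.mul_const _) (by fun_prop) (sub_ne_zero.mpr hu), pd_mul_const hA, pd_sub_apply]
  rfl

lemma pd_omegaMat_sub_pd_omegaMat_apply (hA : DifferentiableAt ℂ (fun v => A v a b) u)
    (hu : a ≠ b → u a ≠ u b) (i k : Fin n) :
    pd i (fun v => omegaMat v (A v) k a b) u - pd k (fun v => omegaMat v (A v) i a b) u =
      (mpd i A u a b * ((if a = k then (1 : ℂ) else 0) - (if b = k then (1 : ℂ) else 0))
        - mpd k A u a b * ((if a = i then (1 : ℂ) else 0) - (if b = i then (1 : ℂ) else 0)))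
        / (u a - u b) := by
  by_cases hab : a = b
  · subst hab
    simp [pd]
  · have hne : u a - u b ≠ 0 := sub_ne_zero.mpr (hu hab)
    rw [pd_omegaMat_apply_of_ne hA (hu hab), pd_omegaMat_apply_of_ne hA (hu hab)]
    field_simp
    ring

lemma omegaMat_commutator_apply (hu : ∀ a b : Fin n, a ≠ b → u a ≠ u b)
    (w : Matrix (Fin n) (Fin n) ℂ) (i k a b : Fin n) :
    (omegaMat u w i * omegaMat u w k - omegaMat u w k * omegaMat u w i) a b =
      ((omegaMat u w i * w - w * omegaMat u w i) a b
          * ((if a = k then (1 : ℂ) else 0) - (if b = k then (1 : ℂ) else 0))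
        - (omegaMat u w k * w - w * omegaMat u w k) a b
          * ((if a = i then (1 : ℂ) else 0) - (if b = i then (1 : ℂ) else 0)))
        / (u a - u b) := by
  simp only [Matrix.sub_apply, Matrix.mul_apply, ← Finset.sum_sub_distrib, Finset.sum_mul,
    Finset.sum_div]
  refine Finset.sum_congr rfl fun c _ => ?_
  by_cases hca : c = a
  · subst hca
    by_cases hcb : c = b
    · subst hcb; simp
    simp only [omegaMat_apply_self, omegaMat_apply_of_ne _ _ _ hcb]
    have hcb' := sub_ne_zero.mpr (hu c b hcb)
    field_simp
    ring
  by_cases hcb : c = b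
  · subst hcb
    simp only [omegaMat_apply_self, omegaMat_apply_of_ne _ _ _ (Ne.symm hca)]
    have hac := sub_ne_zero.mpr (hu a c (Ne.symm hca))
    field_simp
    ring
  have hac := sub_ne_zero.mpr (hu a c (Ne.symm hca))
  have hcb' := sub_ne_zero.mpr (hu c b hcb)
  simp only [omegaMat_apply_of_ne _ _ _ hcb, omegaMat_apply_of_ne _ _ _ (Ne.symm hca)]
  by_cases hab : a = b
  · subst hab
    simp only [sub_self, mul_zero, div_zero]
    field_simp
    ring
  have hab' := sub_ne_zero.mpr (hu a b hab)
  field_simp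
  ring

end Omega

/-- if `∂_j A = [ω_j(u,A), A]` on `U` for all `j`, then the maps
`u ↦ ω_j(u,A(u))` are differentiable on `U` and satisfy the zero-curvature relations
`∂_i ω_k − ∂_k ω_i = [ω_i, ω_k]` on `U`. -/
theorem stmt6 {n : ℕ} (U : Set (Fin n → ℂ)) (hUopen : IsOpen U)
    (hdist : ∀ u ∈ U, ∀ a b : Fin n, a ≠ b → u a ≠ u b)
    (A : (Fin n → ℂ) → Matrix (Fin n) (Fin n) ℂ)
    (hdiff : ∀ a b : Fin n, DifferentiableOn ℂ (fun u => A u a b) U)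
    (hA : ∀ u ∈ U, ∀ j : Fin n,
      mpd j A u = omegaMat u (A u) j * A u - A u * omegaMat u (A u) j) :
    (∀ j a b : Fin n, DifferentiableOn ℂ (fun u => omegaMat u (A u) j a b) U)
      ∧ (∀ u ∈ U, ∀ i k : Fin n,
          mpd i (fun v => omegaMat v (A v) k) u - mpd k (fun v => omegaMat v (A v) i) u
            = omegaMat u (A u) i * omegaMat u (A u) k
              - omegaMat u (A u) k * omegaMat u (A u) i) := by
  refine ⟨differentiableOn_omegaMat_apply hdist hdiff, fun u hu i k => ?_⟩
  ext a b
  have hAu : DifferentiableAt ℂ (fun v => A v a b) u :=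
    (hdiff a b).differentiableAt (hUopen.mem_nhds hu)
  rw [omegaMat_commutator_apply (hdist u hu), ← hA u hu i, ← hA u hu k, Matrix.sub_apply]
  exact pd_omegaMat_sub_pd_omegaMat_apply hAu (hdist u hu a b) i k
end

section
/- Let U ⊆ ℂ^n be open with u_a ≠ u_b for every u ∈ U and all a ≠ b. Let B_1,…,B_n : U → M_n(ℂ) and γ_1,…,γ_n : U → M_n(ℂ) be differentiable, and let G : U → GL_n(ℂ) be differentiable with ∂_j G = γ_j G on U for every j. Set B̂_k := G^{-1} B_k G. Then the pair (B_k, γ_k) satisfies the non-normalized Schlesinger equations, i.e. ∂_i B_k = [B_i, B_k]/(u_i − u_k) + [γ_i, B_k] for i ≠ k and ∂_i B_i = −∑_{k≠i} [B_i, B_k]/(u_i − u_k) + [γ_i, B_i] for every i, if and only if the matrices B̂_k satisfy the normalized Schlesinger equations ∂_i B̂_k = [B̂_i, B̂_k]/(u_i − u_k) for i ≠ k and ∂_i B̂_i = −∑_{k≠i} [B̂_i, B̂_k]/(u_i − u_k) for every i. -/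
open Filter Topology

section Differentiability

variable {𝕜 E : Type*} [NontriviallyNormedField 𝕜] [NormedAddCommGroup E] [NormedSpace 𝕜 E]
  {l m p : Type*} [Fintype m] {x : E}

theorem differentiableAt_matrix_mul_apply {A : E → Matrix l m 𝕜} {B : E → Matrix m p 𝕜}
    (hA : ∀ a b, DifferentiableAt 𝕜 (fun v => A v a b) x)
    (hB : ∀ a b, DifferentiableAt 𝕜 (fun v => B v a b) x) (a : l) (b : p) :
    DifferentiableAt 𝕜 (fun v => (A v * B v) a b) x := by
  simp only [Matrix.mul_apply]
  fun_prop

variable [DecidableEq m]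

theorem differentiableAt_matrix_det {M : E → Matrix m m 𝕜}
    (hM : ∀ a b, DifferentiableAt 𝕜 (fun v => M v a b) x) :
    DifferentiableAt 𝕜 (fun v => (M v).det) x := by
  simp only [Matrix.det_apply']
  fun_prop

theorem differentiableAt_matrix_adjugate_apply {M : E → Matrix m m 𝕜}
    (hM : ∀ a b, DifferentiableAt 𝕜 (fun v => M v a b) x) (a b : m) :
    DifferentiableAt 𝕜 (fun v => (M v).adjugate a b) x := by
  simp only [Matrix.adjugate_apply]
  refine differentiableAt_matrix_det fun c d => ?_
  by_cases hc : c = b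
  · simp [hc]
  · simpa [Matrix.updateRow_apply, hc] using hM c d

theorem differentiableAt_matrix_inv_apply {M : E → Matrix m m 𝕜}
    (hM : ∀ a b, DifferentiableAt 𝕜 (fun v => M v a b) x) (hx : IsUnit (M x)) (a b : m) :
    DifferentiableAt 𝕜 (fun v => (M v)⁻¹ a b) x := by
  simp only [Matrix.inv_def, Matrix.smul_apply, Ring.inverse_eq_inv', smul_eq_mul]
  exact ((differentiableAt_matrix_det hM).inv ((M x).isUnit_iff_isUnit_det.mp hx).ne_zero).mul
    (differentiableAt_matrix_adjugate_apply hM a b)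

end Differentiability

section PartialDerivative

variable {n : ℕ} {j : Fin n} {A B : (Fin n → ℂ) → Matrix (Fin n) (Fin n) ℂ} {u : Fin n → ℂ}

theorem mpd_congr_of_eventuallyEq (h : A =ᶠ[𝓝 u] B) : mpd j A u = mpd j B u := by
  ext a b
  simp only [mpd, pd, Matrix.of_apply]
  have hab : (fun v => A v a b) =ᶠ[𝓝 u] fun v => B v a b :=
    h.mono fun v hv => congrFun (congrFun hv a) b
  rw [hab.fderiv_eq]

theorem mpd_mul (hA : ∀ a b, DifferentiableAt ℂ (fun v => A v a b) u)
    (hB : ∀ a b, DifferentiableAt ℂ (fun v => B v a b) u) :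
    mpd j (fun v => A v * B v) u = mpd j A u * B u + A u * mpd j B u := by
  ext a b
  simp only [mpd, pd, Matrix.of_apply, Matrix.add_apply, Matrix.mul_apply]
  rw [fderiv_fun_sum (A := fun c v => A v a c * B v c b) fun c _ => (hA a c).mul (hB c b),
    _root_.sum_apply, ← Finset.sum_add_distrib]
  refine Finset.sum_congr rfl fun c _ => ?_
  rw [fderiv_fun_mul (hA a c) (hB c b)]
  simp [mul_comm, add_comm]

theorem mpd_conj {G : (Fin n → ℂ) → Matrix (Fin n) (Fin n) ℂ} {γ : Matrix (Fin n) (Fin n) ℂ}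
    (hA : ∀ a b, DifferentiableAt ℂ (fun v => A v a b) u)
    (hG : ∀ a b, DifferentiableAt ℂ (fun v => G v a b) u)
    (hGunit : ∀ᶠ v in 𝓝 u, IsUnit (G v)) (hGj : mpd j G u = γ * G u) :
    mpd j (fun v => (G v)⁻¹ * A v * G v) u
      = (G u)⁻¹ * (mpd j A u - (γ * A u - A u * γ)) * G u := by
  set C := fun v => (G v)⁻¹ * A v * G v
  have hGu : IsUnit (G u).det := (G u).isUnit_iff_isUnit_det.mp hGunit.self_of_nhds
  have hGC : ∀ᶠ v in 𝓝 u, G v * C v = A v * G v := hGunit.mono fun v hv => by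
    simp only [C, ← Matrix.mul_assoc, Matrix.mul_nonsing_inv _ ((G v).isUnit_iff_isUnit_det.mp hv),
      Matrix.one_mul]
  have hC : ∀ a b, DifferentiableAt ℂ (fun v => C v a b) u :=
    differentiableAt_matrix_mul_apply
      (differentiableAt_matrix_mul_apply
        (differentiableAt_matrix_inv_apply hG hGunit.self_of_nhds) hA) hG
  have leibniz : mpd j G u * C u + G u * mpd j C u = mpd j A u * G u + A u * mpd j G u := by
    rw [← mpd_mul hG hC, ← mpd_mul hA hG]
    exact mpd_congr_of_eventuallyEq hGC
  have hGCu : G u * C u = A u * G u := hGC.self_of_nhds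
  calc mpd j C u = (G u)⁻¹ * (G u * mpd j C u) := by
        rw [← Matrix.mul_assoc, Matrix.nonsing_inv_mul _ hGu, Matrix.one_mul]
    _ = (G u)⁻¹ * ((mpd j A u - (γ * A u - A u * γ)) * G u) := by
        rw [eq_sub_of_add_eq' leibniz, hGj, Matrix.mul_assoc γ, hGCu]
        noncomm_ring
    _ = _ := (Matrix.mul_assoc _ _ _).symm

end PartialDerivative

namespace Units

variable (R : Type*) {A : Type*} [CommSemiring R] [Ring A] [Algebra R A]

def conjAlgEquiv (g : Aˣ) : A ≃ₐ[R] A :=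
  MulSemiringAction.toAlgEquiv R A (ConjAct.toConjAct g⁻¹)

theorem conjAlgEquiv_apply (g : Aˣ) (x : A) : g.conjAlgEquiv R x = ↑g⁻¹ * x * g := by
  simp [conjAlgEquiv, ConjAct.units_smul_def]

end Units

theorem stmt7_general {n : ℕ} (U : Set (Fin n → ℂ)) (hUopen : IsOpen U)
    (B γ : Fin n → (Fin n → ℂ) → Matrix (Fin n) (Fin n) ℂ)
    (hBdiff : ∀ k, ∀ a b : Fin n, DifferentiableOn ℂ (fun u => B k u a b) U)
    (G : (Fin n → ℂ) → Matrix (Fin n) (Fin n) ℂ)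
    (hGdiff : ∀ a b : Fin n, DifferentiableOn ℂ (fun u => G u a b) U)
    (hGinv : ∀ u ∈ U, IsUnit (G u))
    (hG : ∀ u ∈ U, ∀ j : Fin n, mpd j G u = γ j u * G u)
    (Bhat : Fin n → (Fin n → ℂ) → Matrix (Fin n) (Fin n) ℂ)
    (hBhat : ∀ k u, Bhat k u = (G u)⁻¹ * B k u * G u) :
    (∀ u ∈ U,
      (∀ i k : Fin n, i ≠ k →
        mpd i (B k) u
          = (u i - u k)⁻¹ • (B i u * B k u - B k u * B i u)
            + (γ i u * B k u - B k u * γ i u))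
      ∧ (∀ i : Fin n,
        mpd i (B i) u
          = -(∑ k ∈ Finset.univ.erase i,
                (u i - u k)⁻¹ • (B i u * B k u - B k u * B i u))
            + (γ i u * B i u - B i u * γ i u)))
    ↔
    (∀ u ∈ U,
      (∀ i k : Fin n, i ≠ k →
        mpd i (Bhat k) u
          = (u i - u k)⁻¹ • (Bhat i u * Bhat k u - Bhat k u * Bhat i u))
      ∧ (∀ i : Fin n,
        mpd i (Bhat i) u
          = -(∑ k ∈ Finset.univ.erase i,
                (u i - u k)⁻¹ • (Bhat i u * Bhat k u - Bhat k u * Bhat i u)))) := by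
  refine forall₂_congr fun u hu => ?_
  have hU : U ∈ 𝓝 u := hUopen.mem_nhds hu
  obtain ⟨g, hg⟩ := hGinv u hu
  set φ := g.conjAlgEquiv ℂ
  have hφ : ∀ X, φ X = (G u)⁻¹ * X * G u := fun X => by
    rw [Units.conjAlgEquiv_apply, Matrix.coe_units_inv, hg]
  have hBhat_apply : ∀ k, Bhat k u = φ (B k u) := fun k => (hBhat k u).trans (hφ _).symm
  have hBhat_mpd : ∀ i k,
      mpd i (Bhat k) u = φ (mpd i (B k) u - (γ i u * B k u - B k u * γ i u)) := by
    intro i k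
    rw [hφ, show Bhat k = fun v => (G v)⁻¹ * B k v * G v from funext (hBhat k)]
    exact mpd_conj (fun a b => (hBdiff k a b).differentiableAt hU)
      (fun a b => (hGdiff a b).differentiableAt hU) (eventually_of_mem hU hGinv) (hG u hu i)
  simp only [hBhat_mpd, hBhat_apply, ← map_mul, ← map_sub, ← map_smul, ← map_sum, ← map_neg,
    φ.injective.eq_iff, sub_eq_iff_eq_add]

/-- with `G` invertible solving `∂_j G = γ_j G`, and `B̂_k := G⁻¹ B_k G`,
the pair `(B_k, γ_k)` satisfies the non-normalized Schlesinger equations iff the `B̂_k`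
satisfy the normalized Schlesinger equations. -/
theorem stmt7 {n : ℕ} (U : Set (Fin n → ℂ)) (hUopen : IsOpen U)
    (hdist : ∀ u ∈ U, ∀ a b : Fin n, a ≠ b → u a ≠ u b)
    (B γ : Fin n → (Fin n → ℂ) → Matrix (Fin n) (Fin n) ℂ)
    (hBdiff : ∀ k, ∀ a b : Fin n, DifferentiableOn ℂ (fun u => B k u a b) U)
    (hγdiff : ∀ k, ∀ a b : Fin n, DifferentiableOn ℂ (fun u => γ k u a b) U)
    (G : (Fin n → ℂ) → Matrix (Fin n) (Fin n) ℂ)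
    (hGdiff : ∀ a b : Fin n, DifferentiableOn ℂ (fun u => G u a b) U)
    (hGinv : ∀ u ∈ U, IsUnit (G u))
    (hG : ∀ u ∈ U, ∀ j : Fin n, mpd j G u = γ j u * G u)
    (Bhat : Fin n → (Fin n → ℂ) → Matrix (Fin n) (Fin n) ℂ)
    (hBhat : ∀ k u, Bhat k u = (G u)⁻¹ * B k u * G u) :
    (∀ u ∈ U,
      (∀ i k : Fin n, i ≠ k →
        mpd i (B k) u
          = (u i - u k)⁻¹ • (B i u * B k u - B k u * B i u)
            + (γ i u * B k u - B k u * γ i u))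
      ∧ (∀ i : Fin n,
        mpd i (B i) u
          = -(∑ k ∈ Finset.univ.erase i,
                (u i - u k)⁻¹ • (B i u * B k u - B k u * B i u))
            + (γ i u * B i u - B i u * γ i u)))
    ↔
    (∀ u ∈ U,
      (∀ i k : Fin n, i ≠ k →
        mpd i (Bhat k) u
          = (u i - u k)⁻¹ • (Bhat i u * Bhat k u - Bhat k u * Bhat i u))
      ∧ (∀ i : Fin n,
        mpd i (Bhat i) u
          = -(∑ k ∈ Finset.univ.erase i,
                (u i - u k)⁻¹ • (Bhat i u * Bhat k u - Bhat k u * Bhat i u)))) :=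
  stmt7_general U hUopen B γ hBdiff G hGdiff hGinv hG Bhat hBhat
end

section
/- Let U ⊆ ℂ^n be open and connected with u_a ≠ u_b for every u ∈ U and all a ≠ b. Let A : U → M_n(ℂ) be differentiable, set B_k(u) := −E_k(A(u)+I) and γ_k := ω_k(u,A(u)), and assume the non-normalized Schlesinger equations hold: ∂_i B_k = [B_i, B_k]/(u_i − u_k) + [γ_i, B_k] for i ≠ k and ∂_i B_i = −∑_{k≠i} [B_i, B_k]/(u_i − u_k) + [γ_i, B_i] for every i. Fix an index i and let G : U → GL_n(ℂ) be differentiable with ∂_k G = (B_k/(u_k − u_i) + γ_k)G for every k ≠ i and ∂_i G = −∑_{k≠i} (B_k/(u_k − u_i) + γ_k)G. Then the map u ↦ G(u)^{-1} B_i(u) G(u) is constant on U. -/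
/-!
Write `Ω_k := B_k/(u_k − u_i) + γ_k` for `k ≠ i` and `Ω_i := −∑_{k≠i} Ω_k`, so that `∂_j G = Ω_j G`
for every `j`. The Schlesinger equations say precisely that `∂_j B_i = [Ω_j, B_i]` for every `j`
(for `j = i` this uses `∑_j γ_j = 0`). Hence
`∂_j (G⁻¹ B_i G) = G⁻¹ (−Ω_j B_i + [Ω_j, B_i] + B_i Ω_j) G = 0`,
and a map with vanishing derivative on a connected open set is constant.
-/

attribute [local instance] LieRing.ofAssociativeRing

theorem fderiv_ringInverse_mul_mul_apply_eq_zero {𝕜 E 𝔸 : Type*} [NontriviallyNormedField 𝕜]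
    [NormedAddCommGroup E] [NormedSpace 𝕜 E] [NormedRing 𝔸] [NormedAlgebra 𝕜 𝔸] [CompleteSpace 𝔸]
    {G B : E → 𝔸} {u w : E} {Ω : 𝔸}
    (hG : DifferentiableAt 𝕜 G u) (hB : DifferentiableAt 𝕜 B u) (hGu : IsUnit (G u))
    (hGw : fderiv 𝕜 G u w = Ω * G u) (hBw : fderiv 𝕜 B u w = ⁅Ω, B u⁆) :
    fderiv 𝕜 (fun v => Ring.inverse (G v) * B v * G v) u w = 0 := by
  obtain ⟨x, hx⟩ := hGu
  have hinv : HasFDerivAt (fun v => Ring.inverse (G v))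
      ((-ContinuousLinearMap.mulLeftRight 𝕜 𝔸 ↑x⁻¹ ↑x⁻¹).comp (fderiv 𝕜 G u)) u := by
    have := hasFDerivAt_ringInverse (𝕜 := 𝕜) x
    rw [hx] at this
    exact this.comp u hG.hasFDerivAt
  rw [((hinv.fun_mul' hB.hasFDerivAt).fun_mul' hG.hasFDerivAt).fderiv]
  simp only [add_apply, smul_apply, ContinuousLinearMap.comp_apply, neg_apply,
    ContinuousLinearMap.mulLeftRight_apply, hGw, hBw, Ring.lie_def]
  rw [← hx, Ring.inverse_unit]
  simp only [smul_eq_mul, MulOpposite.smul_eq_mul_unop, MulOpposite.unop_op, add_mul, mul_sub,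
    sub_mul, neg_mul, mul_assoc, Units.mul_inv_cancel_left]
  abel

theorem neg_sum_smul_lie_add_lie_eq_lie {ι K R : Type*} [Fintype ι] [DecidableEq ι] [Field K]
    [Ring R] [Algebra K R] (u : ι → K) (B ω : ι → R) (hω : ∑ k, ω k = 0) (i : ι) :
    -(∑ k ∈ Finset.univ.erase i, (u i - u k)⁻¹ • ⁅B i, B k⁆) + ⁅ω i, B i⁆
      = ⁅-∑ k ∈ Finset.univ.erase i, ((u k - u i)⁻¹ • B k + ω k), B i⁆ := by
  have hω' : ∑ k ∈ Finset.univ.erase i, ω k = -ω i := by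
    rw [← Finset.add_sum_erase _ _ (Finset.mem_univ i)] at hω
    exact eq_neg_of_add_eq_zero_right hω
  have hskew : ∀ k, (u k - u i)⁻¹ • ⁅B k, B i⁆ = (u i - u k)⁻¹ • ⁅B i, B k⁆ := fun k => by
    rw [← lie_skew (B i) (B k), smul_neg, ← neg_smul, ← inv_neg, neg_sub]
  simp only [neg_lie, sum_lie, add_lie, smul_lie, hskew]
  rw [Finset.sum_add_distrib, ← sum_lie, hω', neg_lie]
  abel

theorem sum_omegaMat_eq_zero {n : ℕ} (u : Fin n → ℂ) (A : Matrix (Fin n) (Fin n) ℂ) :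
    ∑ j, omegaMat u A j = 0 := by
  ext a b
  by_cases hab : a = b
  · simp [omegaMat, Matrix.sum_apply, hab]
  · simp [omegaMat, Matrix.sum_apply, hab, ← Finset.sum_div, ← Finset.mul_sum,
      Finset.sum_sub_distrib]

-- Any norm would do; this one makes matrices a complete normed algebra.
attribute [local instance] Matrix.linftyOpNormedAddCommGroup Matrix.linftyOpNormedRing
  Matrix.linftyOpNormedAlgebra

section MatrixCalculus

variable {n : ℕ} {f : (Fin n → ℂ) → Matrix (Fin n) (Fin n) ℂ}

theorem differentiableOn_of_entries {s : Set (Fin n → ℂ)}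
    (h : ∀ a b, DifferentiableOn ℂ (fun u => f u a b) s) : DifferentiableOn ℂ f s := by
  have hf : f = fun u => ∑ a, ∑ b, f u a b • Matrix.single a b (1 : ℂ) := by
    funext u
    conv_lhs => rw [Matrix.matrix_eq_sum_single (f u)]
    simp [Matrix.smul_single]
  rw [hf]
  exact DifferentiableOn.fun_sum fun a _ => DifferentiableOn.fun_sum fun b _ =>
    (h a b).smul_const _

theorem mpd_eq_fderiv_apply {u : Fin n → ℂ} (hf : DifferentiableAt ℂ f u) (j : Fin n) :
    mpd j f u = fderiv ℂ f u (Pi.single j 1) := by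
  ext a b
  let entry : Matrix (Fin n) (Fin n) ℂ →L[ℂ] ℂ :=
    LinearMap.toContinuousLinearMap (Matrix.entryLinearMap ℂ ℂ a b)
  exact congrArg (· (Pi.single j 1)) (entry.hasFDerivAt.comp u hf.hasFDerivAt).fderiv

end MatrixCalculus

theorem stmt9_general {n : ℕ} (U : Set (Fin n → ℂ)) (hUopen : IsOpen U) (hUconn : IsConnected U)
    (A : (Fin n → ℂ) → Matrix (Fin n) (Fin n) ℂ)
    (hdiff : ∀ a b : Fin n, DifferentiableOn ℂ (fun u => A u a b) U)
    (B : Fin n → (Fin n → ℂ) → Matrix (Fin n) (Fin n) ℂ)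
    (hB : ∀ k u, B k u = -(Matrix.single k k (1 : ℂ) * (A u + 1)))
    (hSch : ∀ u ∈ U,
      (∀ i k : Fin n, i ≠ k →
        mpd i (B k) u
          = (u i - u k)⁻¹ • (B i u * B k u - B k u * B i u)
            + (omegaMat u (A u) i * B k u - B k u * omegaMat u (A u) i))
      ∧ (∀ i : Fin n,
        mpd i (B i) u
          = -(∑ k ∈ Finset.univ.erase i,
                (u i - u k)⁻¹ • (B i u * B k u - B k u * B i u))
            + (omegaMat u (A u) i * B i u - B i u * omegaMat u (A u) i)))
    (i : Fin n)
    (G : (Fin n → ℂ) → Matrix (Fin n) (Fin n) ℂ)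
    (hGdiff : ∀ a b : Fin n, DifferentiableOn ℂ (fun u => G u a b) U)
    (hGinv : ∀ u ∈ U, IsUnit (G u))
    (hG : ∀ u ∈ U, ∀ k : Fin n, k ≠ i →
      mpd k G u = ((u k - u i)⁻¹ • B k u + omegaMat u (A u) k) * G u)
    (hGi : ∀ u ∈ U,
      mpd i G u
        = -((∑ k ∈ Finset.univ.erase i,
              ((u k - u i)⁻¹ • B k u + omegaMat u (A u) k)) * G u)) :
    ∀ u ∈ U, ∀ v ∈ U, (G u)⁻¹ * B i u * G u = (G v)⁻¹ * B i v * G v := by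
  have hGd : DifferentiableOn ℂ G U := differentiableOn_of_entries hGdiff
  have hBd : DifferentiableOn ℂ (B i) U := by
    rw [show B i = _ from funext (hB i)]
    exact ((differentiableOn_const _).mul ((differentiableOn_of_entries hdiff).add_const 1)).neg
  have hF : DifferentiableOn ℂ (fun v => Ring.inverse (G v) * B i v * G v) U :=
    ((hGd.inverse hGinv).mul hBd).mul hGd
  have hF' : U.EqOn (fderiv ℂ fun v => Ring.inverse (G v) * B i v * G v) 0 := by
    intro u hu
    have hGu := hGd.differentiableAt (hUopen.mem_nhds hu)
    have hBu := hBd.differentiableAt (hUopen.mem_nhds hu)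
    refine ContinuousLinearMap.coe_injective ((Pi.basisFun ℂ (Fin n)).ext fun j => ?_)
    obtain ⟨Ω, hGΩ, hBΩ⟩ : ∃ Ω, mpd j G u = Ω * G u ∧ mpd j (B i) u = ⁅Ω, B i u⁆ := by
      simp only [← Ring.lie_def] at hSch
      rcases eq_or_ne j i with rfl | hj
      · refine ⟨_, (hGi u hu).trans (neg_mul _ _).symm, ?_⟩
        rw [(hSch u hu).2 j]
        exact neg_sum_smul_lie_add_lie_eq_lie u (B · u) _ (sum_omegaMat_eq_zero u (A u)) j
      · exact ⟨_, hG u hu j hj, by rw [(hSch u hu).1 j i hj, add_lie, smul_lie]⟩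
    rw [mpd_eq_fderiv_apply hGu] at hGΩ
    rw [mpd_eq_fderiv_apply hBu] at hBΩ
    rw [Pi.basisFun_apply]
    exact fderiv_ringInverse_mul_mul_apply_eq_zero hGu hBu (hGinv u hu) hGΩ hBΩ
  intro u hu v hv
  simp only [Matrix.nonsing_inv_eq_ringInverse]
  exact hUopen.is_const_of_fderiv_eq_zero hUconn.isPreconnected hF hF' hu hv

/-- under the non-normalized Schlesinger equations for
`B_k(u) := −E_k(A(u)+I)` with `γ_k = ω_k(u,A(u))`, if `G` is an invertible solution of
`∂_k G = (B_k/(u_k − u_i) + γ_k)G` (`k ≠ i`), `∂_i G = −∑_{k≠i}(B_k/(u_k − u_i) + γ_k)G`,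
then `u ↦ G(u)⁻¹ B_i(u) G(u)` is constant on `U`. -/
theorem stmt9 {n : ℕ} (U : Set (Fin n → ℂ)) (hUopen : IsOpen U) (hUconn : IsConnected U)
    (hdist : ∀ u ∈ U, ∀ a b : Fin n, a ≠ b → u a ≠ u b)
    (A : (Fin n → ℂ) → Matrix (Fin n) (Fin n) ℂ)
    (hdiff : ∀ a b : Fin n, DifferentiableOn ℂ (fun u => A u a b) U)
    (B : Fin n → (Fin n → ℂ) → Matrix (Fin n) (Fin n) ℂ)
    (hB : ∀ k u, B k u = -(Matrix.single k k (1 : ℂ) * (A u + 1)))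
    (hSch : ∀ u ∈ U,
      (∀ i k : Fin n, i ≠ k →
        mpd i (B k) u
          = (u i - u k)⁻¹ • (B i u * B k u - B k u * B i u)
            + (omegaMat u (A u) i * B k u - B k u * omegaMat u (A u) i))
      ∧ (∀ i : Fin n,
        mpd i (B i) u
          = -(∑ k ∈ Finset.univ.erase i,
                (u i - u k)⁻¹ • (B i u * B k u - B k u * B i u))
            + (omegaMat u (A u) i * B i u - B i u * omegaMat u (A u) i)))
    (i : Fin n)
    (G : (Fin n → ℂ) → Matrix (Fin n) (Fin n) ℂ)
    (hGdiff : ∀ a b : Fin n, DifferentiableOn ℂ (fun u => G u a b) U)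
    (hGinv : ∀ u ∈ U, IsUnit (G u))
    (hG : ∀ u ∈ U, ∀ k : Fin n, k ≠ i →
      mpd k G u = ((u k - u i)⁻¹ • B k u + omegaMat u (A u) k) * G u)
    (hGi : ∀ u ∈ U,
      mpd i G u
        = -((∑ k ∈ Finset.univ.erase i,
              ((u k - u i)⁻¹ • B k u + omegaMat u (A u) k)) * G u)) :
    ∀ u ∈ U, ∀ v ∈ U, (G u)⁻¹ * B i u * G u = (G v)⁻¹ * B i v * G v :=
  stmt9_general U hUopen hUconn A hdiff B hB hSch i G hGdiff hGinv hG hGi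
end

section
/- Let p ≥ 1 and, for l = 1,…,p, let T^{(l)}, R^{(l)} ∈ M_n(ℂ) and positive integers k_l be given such that: [T^{(i)}, T^{(l)}] = 0 for all i,l; [R^{(i)}, R^{(l)}] = 0 for all i,l; [T^{(i)}, R^{(l)}] = 0 whenever i ≠ l; and x^{T^{(l)}} R^{(l)} x^{−T^{(l)}} = x^{k_l}·R^{(l)} for every x ∈ ℂ∖(−∞,0] and every l. Then the matrix-valued function Z(x_1,…,x_p) := (∏_{l=1}^p x_l^{T^{(l)}}) · (∏_{l=1}^p x_l^{R^{(l)}}) on (ℂ∖(−∞,0])^p satisfies, for each i = 1,…,p, the partial differential equation ∂Z/∂x_i = x_i^{-1}·(T^{(i)} + R^{(i)} x_i^{k_i})·Z. -/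
/-- `x^M := exp((log x)·M)`, with the principal branch of the complex logarithm and the
matrix exponential. -/
noncomputable def mpow {n : ℕ} (x : ℂ) (M : Matrix (Fin n) (Fin n) ℂ) :
    Matrix (Fin n) (Fin n) ℂ :=
  NormedSpace.exp (Complex.log x • M)

/-!
Since the `T^{(l)}` commute with each other, the factor `x_i^{T^{(i)}}` can be pulled to the front
of the first product, and likewise `x_i^{R^{(i)}}` in the second; as `R^{(i)}` commutes with every
`T^{(l)}`, `l ≠ i`, this gives `Z = x_i^{T^{(i)}} x_i^{R^{(i)}} C` with `C` independent of `x_i`.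
The product rule and `x^{T} R = x^{k} R x^{T}` then give the equation.
-/

theorem List.prod_ofFn_eq_mul_prod_ofFn_update_one {M : Type*} [Monoid M] :
    ∀ {p : ℕ} (g : Fin p → M) (i : Fin p), (∀ j, Commute (g i) (g j)) →
      (List.ofFn g).prod = g i * (List.ofFn (Function.update g i 1)).prod
  | 0, _, i, _ => i.elim0
  | p + 1, g, i, hg => by
    rw [List.ofFn_succ, List.ofFn_succ, List.prod_cons, List.prod_cons]
    induction i using Fin.cases with
    | zero =>
      simp only [Function.update_self, one_mul]
      congr 3
    | succ i =>
      have hrest := List.prod_ofFn_eq_mul_prod_ofFn_update_one (fun j => g j.succ) i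
        fun j => hg j.succ
      have hshift : (fun j => Function.update g i.succ 1 j.succ) =
          Function.update (fun j => g j.succ) i 1 :=
        Function.update_comp_eq_of_injective g (Fin.succ_injective p) i 1
      rw [hrest, Function.update_of_ne (Fin.succ_ne_zero i).symm, hshift]
      exact ((hg 0).left_comm _).symm

theorem List.commute_prod_ofFn_update_one {M : Type*} [Monoid M] {p : ℕ} (g : Fin p → M)
    (i : Fin p) {b : M} (hg : ∀ j, j ≠ i → Commute (g j) b) :
    Commute (List.ofFn (Function.update g i 1)).prod b := by
  refine Commute.list_prod_left _ _ fun a ha => ?_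
  obtain ⟨j, rfl⟩ := List.mem_ofFn.mp ha
  by_cases hji : j = i
  · subst hji
    simp
  · simpa [Function.update_of_ne hji] using hg j hji

attribute [local instance] Matrix.linftyOpNormedAddCommGroup Matrix.linftyOpNormedRing
  Matrix.linftyOpNormedAlgebra

section mpow

variable {n : ℕ}

theorem hasDerivAt_mpow (M : Matrix (Fin n) (Fin n) ℂ) {x : ℂ} (hx : x ∈ Complex.slitPlane) :
    HasDerivAt (fun t => mpow t M) (x⁻¹ • (M * mpow x M)) x :=
  (hasDerivAt_exp_smul_const' M (Complex.log x)).scomp x (Complex.hasDerivAt_log hx)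

theorem Commute.mpow_mpow {M N : Matrix (Fin n) (Fin n) ℂ} (h : Commute M N) (x y : ℂ) :
    Commute (mpow x M) (mpow y N) :=
  ((h.smul_left _).smul_right _).exp

theorem mpow_neg_mul_mpow (x : ℂ) (M : Matrix (Fin n) (Fin n) ℂ) :
    mpow x (-M) * mpow x M = 1 := by
  rw [mpow, mpow, smul_neg, Matrix.exp_neg, Matrix.nonsing_inv_mul]
  exact (Matrix.isUnit_exp _).map Matrix.detMonoidHom

theorem mpow_mul_eq_smul_mul_mpow {M N : Matrix (Fin n) (Fin n) ℂ} {x c : ℂ}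
    (h : mpow x M * N * mpow x (-M) = c • N) : mpow x M * N = c • (N * mpow x M) := by
  rw [← smul_mul_assoc, ← h, mul_assoc _ (mpow x (-M)), mpow_neg_mul_mpow, mul_one]

theorem hasDerivAt_mpow_mul_mpow {M N : Matrix (Fin n) (Fin n) ℂ} {x c : ℂ}
    (hx : x ∈ Complex.slitPlane) (h : mpow x M * N = c • (N * mpow x M)) :
    HasDerivAt (fun t => mpow t M * mpow t N)
      (x⁻¹ • ((M + c • N) * (mpow x M * mpow x N))) x := by
  refine ((hasDerivAt_mpow M hx).mul (hasDerivAt_mpow N hx)).congr_deriv ?_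
  rw [mul_smul_comm, ← mul_assoc (mpow x M), h]
  simp only [add_mul, smul_add, smul_mul_assoc, mul_assoc]

theorem prod_ofFn_mpow_update {p : ℕ} (A : Fin p → Matrix (Fin n) (Fin n) ℂ) (i : Fin p)
    (hA : ∀ j, Commute (A i) (A j)) (x : Fin p → ℂ) (t : ℂ) :
    (List.ofFn fun l => mpow (Function.update x i t l) (A l)).prod =
      mpow t (A i) * (List.ofFn (Function.update (fun l => mpow (x l) (A l)) i 1)).prod := by
  rw [List.prod_ofFn_eq_mul_prod_ofFn_update_one _ i fun j => (hA j).mpow_mpow _ _,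
    Function.update_self]
  congr 3
  funext j
  by_cases hji : j = i
  · simp [hji]
  · simp [Function.update_of_ne hji]

theorem HasDerivAt.matrix_apply {f : ℂ → Matrix (Fin n) (Fin n) ℂ}
    {f' : Matrix (Fin n) (Fin n) ℂ} {x : ℂ} (h : HasDerivAt f f' x) (a b : Fin n) :
    HasDerivAt (fun t => f t a b) (f' a b) x :=
  (Matrix.entryLinearMap ℂ ℂ a b).toContinuousLinearMap.hasFDerivAt.comp_hasDerivAt x h

end mpow

theorem stmt14_general {n p : ℕ}
    (T R : Fin p → Matrix (Fin n) (Fin n) ℂ) (k : Fin p → ℕ)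
    (hTT : ∀ i l : Fin p, T i * T l = T l * T i)
    (hRR : ∀ i l : Fin p, R i * R l = R l * R i)
    (hTR : ∀ i l : Fin p, i ≠ l → T i * R l = R l * T i)
    (hconj : ∀ x : ℂ, x ∈ Complex.slitPlane → ∀ l : Fin p,
      mpow x (T l) * R l * mpow x (-(T l)) = (x ^ (k l : ℂ)) • R l)
    (Z : (Fin p → ℂ) → Matrix (Fin n) (Fin n) ℂ)
    (hZ : ∀ x : Fin p → ℂ, Z x =
      (List.ofFn fun l => mpow (x l) (T l)).prod *
        (List.ofFn fun l => mpow (x l) (R l)).prod) :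
    ∀ x : Fin p → ℂ, (∀ l, x l ∈ Complex.slitPlane) → ∀ i : Fin p, ∀ a b : Fin n,
      HasDerivAt (fun t : ℂ => Z (Function.update x i t) a b)
        (((x i)⁻¹ • ((T i + (x i ^ (k i : ℂ)) • R i) * Z x)) a b) (x i) := by
  intro x hx i a b
  set P := (List.ofFn (Function.update (fun l => mpow (x l) (T l)) i 1)).prod
  set Q := (List.ofFn (Function.update (fun l => mpow (x l) (R l)) i 1)).prod
  have hZ_update : ∀ t, Z (Function.update x i t) = mpow t (T i) * mpow t (R i) * (P * Q) := by
    intro t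
    have hPR : Commute P (mpow t (R i)) :=
      List.commute_prod_ofFn_update_one _ i fun j hji => Commute.mpow_mpow (hTR j i hji) _ _
    rw [hZ, prod_ofFn_mpow_update T i (fun j => hTT i j), prod_ofFn_mpow_update R i
      (fun j => hRR i j), mul_assoc, ← mul_assoc P, hPR.eq]
    simp only [mul_assoc, Q]
  have hderiv := (hasDerivAt_mpow_mul_mpow (hx i)
    (mpow_mul_eq_smul_mul_mpow (hconj (x i) (hx i) i))).mul_const (P * Q)
  have hZx : Z x = mpow (x i) (T i) * mpow (x i) (R i) * (P * Q) := by
    simpa using hZ_update (x i)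
  rw [hZx, ← mul_assoc, ← smul_mul_assoc]
  simpa only [hZ_update] using hderiv.matrix_apply a b

/-- given commuting families `T^{(l)}, R^{(l)}` with
`x^{T^{(l)}} R^{(l)} x^{−T^{(l)}} = x^{k_l}·R^{(l)}`, the function
`Z(x) := (∏_l x_l^{T^{(l)}})·(∏_l x_l^{R^{(l)}})` (products in increasing order of `l`)
satisfies `∂Z/∂x_i = x_i⁻¹(T^{(i)} + R^{(i)} x_i^{k_i})·Z` for each `i`. -/
theorem stmt14 {n p : ℕ} (hp : 1 ≤ p)
    (T R : Fin p → Matrix (Fin n) (Fin n) ℂ) (k : Fin p → ℕ) (hk : ∀ l, 0 < k l)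
    (hTT : ∀ i l : Fin p, T i * T l = T l * T i)
    (hRR : ∀ i l : Fin p, R i * R l = R l * R i)
    (hTR : ∀ i l : Fin p, i ≠ l → T i * R l = R l * T i)
    (hconj : ∀ x : ℂ, x ∈ Complex.slitPlane → ∀ l : Fin p,
      mpow x (T l) * R l * mpow x (-(T l)) = (x ^ (k l : ℂ)) • R l)
    (Z : (Fin p → ℂ) → Matrix (Fin n) (Fin n) ℂ)
    (hZ : ∀ x : Fin p → ℂ, Z x =
      (List.ofFn fun l => mpow (x l) (T l)).prod *
        (List.ofFn fun l => mpow (x l) (R l)).prod) :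
    ∀ x : Fin p → ℂ, (∀ l, x l ∈ Complex.slitPlane) → ∀ i : Fin p, ∀ a b : Fin n,
      HasDerivAt (fun t : ℂ => Z (Function.update x i t) a b)
        (((x i)⁻¹ • ((T i + (x i ^ (k i : ℂ)) • R i) * Z x)) a b) (x i) :=
  stmt14_general T R k hTT hRR hTR hconj Z hZ
end

section
/- Let n ≥ 1, u = (u_1,…,u_n) ∈ ℂ^n, Λ := diag(u_1,…,u_n), and A ∈ M_n(ℂ). Let γ : [0,1] → ℂ be continuously differentiable, let Ω ⊆ ℂ be open with γ([0,1]) ⊆ Ω, and let Ψ : Ω → ℂ^n be holomorphic satisfying (Λ − λ·I)·Ψ′(λ) = (A + I)·Ψ(λ) for all λ ∈ Ω. Define Y(z) := ∫_0^1 e^{γ(t)·z} Ψ(γ(t)) γ′(t) dt for z ∈ ℂ. If z_0 ∈ ℂ∖{0} is such that e^{γ(1)·z_0}(γ(1)·I − Λ)Ψ(γ(1)) = e^{γ(0)·z_0}(γ(0)·I − Λ)Ψ(γ(0)), then Y is differentiable at z_0 and Y′(z_0) = (Λ + A/z_0)·Y(z_0). -/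
/-!
Differentiating under the integral sign gives `Y'(z) = ∫ γ e^{γz} Ψ(γ) γ' dt`. By the ODE, the
boundary term `h(λ) = e^{λz}(λI - Λ)Ψ(λ)` has derivative `e^{λz}(z(λI - Λ)Ψ(λ) - AΨ(λ))`, so
integrating `h'` along `γ` and using `h(γ 1) = h(γ 0)` gives `z Y'(z) = (zΛ + A) Y(z)`.
-/

open scoped Matrix Interval

open MeasureTheory Set

theorem hasDerivAt_intervalIntegral_cexp_mul_smul {E : Type*} [NormedAddCommGroup E]
    [NormedSpace ℂ E] {γ : ℝ → ℂ} {f : ℝ → E} {a b : ℝ}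
    (hγ : ContinuousOn γ (uIcc a b)) (hf : ContinuousOn f (uIcc a b)) (z : ℂ) :
    HasDerivAt (fun w => ∫ t in a..b, Complex.exp (γ t * w) • f t)
      (∫ t in a..b, (γ t * Complex.exp (γ t * z)) • f t) z := by
  have hmeas {g : ℝ → E} (hg : ContinuousOn g (uIcc a b)) :
      AEStronglyMeasurable g (volume.restrict (Ι a b)) :=
    (hg.mono uIoc_subset_uIcc).aestronglyMeasurable measurableSet_uIoc
  have hcont (w : ℂ) : ContinuousOn (fun t => Complex.exp (γ t * w) • f t) (uIcc a b) := by
    fun_prop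
  refine (intervalIntegral.hasDerivAt_integral_of_dominated_loc_of_deriv_le
    (F' := fun w t => (γ t * Complex.exp (γ t * w)) • f t)
    (bound := fun t => ‖γ t‖ * Real.exp (‖γ t‖ * (‖z‖ + 1)) * ‖f t‖)
    (Metric.ball_mem_nhds z one_pos) (.of_forall fun w => hmeas (hcont w))
    (hcont z).intervalIntegrable (hmeas (by fun_prop)) ?_
    (ContinuousOn.intervalIntegrable (by fun_prop)) ?_).2
  · refine .of_forall fun t _ w hw => ?_
    have hw' : ‖w‖ ≤ ‖z‖ + 1 := by
      have := mem_ball_iff_norm.1 hw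
      linarith [norm_le_norm_add_norm_sub' w z, norm_sub_rev w z]
    have hexp : ‖Complex.exp (γ t * w)‖ ≤ Real.exp (‖γ t‖ * (‖z‖ + 1)) :=
      (Complex.norm_exp_le_exp_norm _).trans (Real.exp_le_exp.2 (by rw [norm_mul]; gcongr))
    rw [norm_smul, norm_mul]
    gcongr
  · exact .of_forall fun t _ w _ => by
      simpa [mul_comm] using ((hasDerivAt_id w).const_mul (γ t)).cexp.smul_const (f t)

theorem integral_smul_deriv_comp_eq_sub {E : Type*} [NormedAddCommGroup E] [NormedSpace ℂ E]
    [CompleteSpace E] {γ γ' : ℝ → ℂ} {h h' : ℂ → E} {a b : ℝ} (hab : a ≤ b)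
    (hγ : ∀ t ∈ Icc a b, HasDerivWithinAt γ (γ' t) (Icc a b) t)
    (hh : ∀ t ∈ Icc a b, HasDerivAt h (h' (γ t)) (γ t))
    (hint : IntervalIntegrable (fun t => γ' t • h' (γ t)) volume a b) :
    ∫ t in a..b, γ' t • h' (γ t) = h (γ b) - h (γ a) := by
  have hcomp (t) (ht : t ∈ Icc a b) :
      HasDerivWithinAt (h ∘ γ) (γ' t • h' (γ t)) (Icc a b) t :=
    (hh t ht).scomp_hasDerivWithinAt t (hγ t ht)
  exact intervalIntegral.integral_eq_sub_of_hasDeriv_right_of_le hab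
    (fun t ht => (hcomp t ht).continuousWithinAt)
    (fun t ht => ((hcomp t (Ioo_subset_Icc_self ht)).hasDerivAt
      (Icc_mem_nhds ht.1 ht.2)).hasDerivWithinAt) hint

section

variable {𝕜 : Type*} {m ι : Type*} [Fintype m] [Fintype ι]

theorem intervalIntegral_mulVec [RCLike 𝕜] (M : Matrix m ι 𝕜) {w : ℝ → ι → 𝕜} {a b : ℝ}
    (hw : IntervalIntegrable w volume a b) :
    ∫ t in a..b, M *ᵥ w t = M *ᵥ (∫ t in a..b, w t) :=
  (LinearMap.toContinuousLinearMap (𝕜 := 𝕜) (Matrix.mulVecLin M)).intervalIntegral_comp_comm hw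

theorem HasDerivAt.const_mulVec [NontriviallyNormedField 𝕜] [CompleteSpace 𝕜]
    (M : Matrix m ι 𝕜) {Ψ : 𝕜 → ι → 𝕜} {ψ' : ι → 𝕜} {x : 𝕜} (hΨ : HasDerivAt Ψ ψ' x) :
    HasDerivAt (fun y => M *ᵥ Ψ y) (M *ᵥ ψ') x :=
  (LinearMap.toContinuousLinearMap (𝕜 := 𝕜) (Matrix.mulVecLin M)).hasFDerivAt.comp_hasDerivAt x hΨ

variable [DecidableEq ι] {Ψ : ℂ → ι → ℂ} {ψ' : ι → ℂ} {lam : ℂ}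

theorem hasDerivAt_smul_one_sub_mulVec (Λ : Matrix ι ι ℂ) (hΨ : HasDerivAt Ψ ψ' lam) :
    HasDerivAt (fun μ => (μ • 1 - Λ) *ᵥ Ψ μ) (Ψ lam + (lam • 1 - Λ) *ᵥ ψ') lam := by
  simp only [Matrix.sub_mulVec, Matrix.smul_mulVec, Matrix.one_mulVec]
  refine (((hasDerivAt_id lam).smul hΨ).sub (hΨ.const_mulVec Λ)).congr_deriv ?_
  simp only [id, one_smul]
  abel

variable {Λ A : Matrix ι ι ℂ}

theorem hasDerivAt_cexp_smul_smul_one_sub_mulVec (z : ℂ) (hΨ : HasDerivAt Ψ ψ' lam)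
    (hODE : (Λ - lam • 1) *ᵥ ψ' = (A + 1) *ᵥ Ψ lam) :
    HasDerivAt (fun μ => Complex.exp (μ * z) • ((μ • 1 - Λ) *ᵥ Ψ μ))
      (Complex.exp (lam * z) • (z • ((lam • 1 - Λ) *ᵥ Ψ lam) - A *ᵥ Ψ lam)) lam := by
  have hdiff : Ψ lam + (lam • 1 - Λ) *ᵥ ψ' = -(A *ᵥ Ψ lam) := by
    rw [← neg_sub, Matrix.neg_mulVec, hODE, Matrix.add_mulVec, Matrix.one_mulVec]
    abel
  refine (((hasDerivAt_id lam).mul_const z).cexp.smul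
    (hasDerivAt_smul_one_sub_mulVec Λ hΨ)).congr_deriv ?_
  rw [hdiff, id, one_mul]
  module

theorem smul_integral_mul_cexp_smul_eq_mulVec {γ γ' : ℝ → ℂ} {Ψ' : ℂ → ι → ℂ} {a b : ℝ}
    (hab : a ≤ b) (hγ : ∀ t ∈ Icc a b, HasDerivWithinAt γ (γ' t) (Icc a b) t)
    (hγ' : ContinuousOn γ' (Icc a b)) (hΨ : ∀ t ∈ Icc a b, HasDerivAt Ψ (Ψ' (γ t)) (γ t))
    (hODE : ∀ t ∈ Icc a b, (Λ - γ t • 1) *ᵥ Ψ' (γ t) = (A + 1) *ᵥ Ψ (γ t)) (z : ℂ)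
    (hbd : Complex.exp (γ b * z) • ((γ b • 1 - Λ) *ᵥ Ψ (γ b))
      = Complex.exp (γ a * z) • ((γ a • 1 - Λ) *ᵥ Ψ (γ a))) :
    z • ∫ t in a..b, (γ t * Complex.exp (γ t * z)) • (γ' t • Ψ (γ t))
      = (z • Λ + A) *ᵥ ∫ t in a..b, Complex.exp (γ t * z) • (γ' t • Ψ (γ t)) := by
  have hγc : ContinuousOn γ (Icc a b) := fun t ht => (hγ t ht).continuousWithinAt
  have hΨγ : ContinuousOn (fun t => Ψ (γ t)) (Icc a b) := fun t ht =>
    (hΨ t ht).continuousAt.comp_continuousWithinAt (hγc t ht)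
  rw [← uIcc_of_le hab] at hγc hγ' hΨγ
  set v := fun t => γ' t • Ψ (γ t)
  have hv : ContinuousOn v (uIcc a b) := hγ'.smul hΨγ
  have hDi : IntervalIntegrable (fun t => z • ((γ t * Complex.exp (γ t * z)) • v t)) volume a b :=
    ContinuousOn.intervalIntegrable (by fun_prop)
  have hYi : IntervalIntegrable (fun t => Complex.exp (γ t * z) • v t) volume a b :=
    ContinuousOn.intervalIntegrable (by fun_prop)
  have hMYi : IntervalIntegrable (fun t => (z • Λ + A) *ᵥ (Complex.exp (γ t * z) • v t))
      volume a b :=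
    ContinuousOn.intervalIntegrable (by fun_prop)
  have hsplit (t : ℝ) :
      γ' t • (Complex.exp (γ t * z) • (z • ((γ t • 1 - Λ) *ᵥ Ψ (γ t)) - A *ᵥ Ψ (γ t)))
        = z • ((γ t * Complex.exp (γ t * z)) • v t)
          - (z • Λ + A) *ᵥ (Complex.exp (γ t * z) • v t) := by
    simp only [v, Matrix.sub_mulVec, Matrix.add_mulVec, Matrix.smul_mulVec, Matrix.one_mulVec,
      Matrix.mulVec_smul]
    module
  have hFTC := integral_smul_deriv_comp_eq_sub hab hγ (h' := fun μ =>
      Complex.exp (μ * z) • (z • ((μ • 1 - Λ) *ᵥ Ψ μ) - A *ᵥ Ψ μ))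
    (fun t ht => hasDerivAt_cexp_smul_smul_one_sub_mulVec z (hΨ t ht) (hODE t ht))
    (by simpa only [hsplit] using hDi.sub hMYi)
  simp only [hsplit] at hFTC
  rwa [hbd, sub_self, intervalIntegral.integral_sub hDi hMYi, intervalIntegral.integral_smul,
    intervalIntegral_mulVec _ hYi, sub_eq_zero] at hFTC

end

theorem stmt15_general {n : ℕ} (u : Fin n → ℂ) (A : Matrix (Fin n) (Fin n) ℂ)
    (γ γ' : ℝ → ℂ)
    (hγ : ∀ t ∈ Set.Icc (0 : ℝ) 1, HasDerivWithinAt γ (γ' t) (Set.Icc (0 : ℝ) 1) t)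
    (hγ' : ContinuousOn γ' (Set.Icc (0 : ℝ) 1))
    (Ω : Set ℂ) (hγΩ : ∀ t ∈ Set.Icc (0 : ℝ) 1, γ t ∈ Ω)
    (Ψ Ψ' : ℂ → (Fin n → ℂ))
    (hΨ : ∀ lam ∈ Ω, HasDerivAt Ψ (Ψ' lam) lam)
    (hODE : ∀ lam ∈ Ω,
      (Matrix.diagonal u - lam • (1 : Matrix (Fin n) (Fin n) ℂ)) *ᵥ Ψ' lam
        = (A + 1) *ᵥ Ψ lam)
    (Y : ℂ → (Fin n → ℂ))
    (hY : ∀ z : ℂ, Y z = ∫ t in (0 : ℝ)..1, (Complex.exp (γ t * z) * γ' t) • Ψ (γ t))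
    (z₀ : ℂ) (hz₀ : z₀ ≠ 0)
    (hbd : Complex.exp (γ 1 * z₀) •
          ((γ 1 • (1 : Matrix (Fin n) (Fin n) ℂ) - Matrix.diagonal u) *ᵥ Ψ (γ 1))
        = Complex.exp (γ 0 * z₀) •
          ((γ 0 • (1 : Matrix (Fin n) (Fin n) ℂ) - Matrix.diagonal u) *ᵥ Ψ (γ 0))) :
    HasDerivAt Y ((Matrix.diagonal u + z₀⁻¹ • A) *ᵥ Y z₀) z₀ := by
  set Λ := Matrix.diagonal u
  have hγc : ContinuousOn γ (uIcc 0 1) := by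
    rw [uIcc_of_le zero_le_one]
    exact fun t ht => (hγ t ht).continuousWithinAt
  have hv : ContinuousOn (fun t => γ' t • Ψ (γ t)) (uIcc 0 1) := by
    rw [uIcc_of_le zero_le_one]
    exact hγ'.smul fun t ht =>
      (hΨ _ (hγΩ t ht)).continuousAt.comp_continuousWithinAt (hγc.mono Icc_subset_uIcc t ht)
  have hYv : Y = fun z => ∫ t in (0 : ℝ)..1, Complex.exp (γ t * z) • (γ' t • Ψ (γ t)) :=
    funext fun z => by simp only [hY, mul_smul]
  have hIBP := smul_integral_mul_cexp_smul_eq_mulVec zero_le_one hγ hγ'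
    (fun t ht => hΨ _ (hγΩ t ht)) (fun t ht => hODE _ (hγΩ t ht)) z₀ hbd
  rw [← congrFun hYv z₀] at hIBP
  set D := ∫ t in (0 : ℝ)..1, (γ t * Complex.exp (γ t * z₀)) • (γ' t • Ψ (γ t))
  have hD : D = (Λ + z₀⁻¹ • A) *ᵥ Y z₀ := calc
    D = z₀⁻¹ • (z₀ • D) := (inv_smul_smul₀ hz₀ D).symm
    _ = (Λ + z₀⁻¹ • A) *ᵥ Y z₀ := by
      rw [hIBP, Matrix.add_mulVec, Matrix.add_mulVec, Matrix.smul_mulVec, Matrix.smul_mulVec,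
        smul_add, inv_smul_smul₀ hz₀]
  rw [← hD, hYv]
  exact hasDerivAt_intervalIntegral_cexp_mul_smul hγc hv z₀

/-- if `Ψ` is holomorphic on `Ω ⊇ γ([0,1])` and satisfies
`(Λ − λI)Ψ′(λ) = (A+I)Ψ(λ)`, and `Y(z) := ∫₀¹ e^{γ(t)z} Ψ(γ(t)) γ′(t) dt`, then at any
`z₀ ≠ 0` where the boundary term `e^{λz₀}(λI − Λ)Ψ(λ)` takes equal values at the two
endpoints of `γ`, `Y` is differentiable with `Y′(z₀) = (Λ + A/z₀)·Y(z₀)`. -/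
theorem stmt15 {n : ℕ} (hn : 1 ≤ n) (u : Fin n → ℂ) (A : Matrix (Fin n) (Fin n) ℂ)
    (γ γ' : ℝ → ℂ)
    (hγ : ∀ t ∈ Set.Icc (0 : ℝ) 1, HasDerivWithinAt γ (γ' t) (Set.Icc (0 : ℝ) 1) t)
    (hγ' : ContinuousOn γ' (Set.Icc (0 : ℝ) 1))
    (Ω : Set ℂ) (hΩ : IsOpen Ω) (hγΩ : ∀ t ∈ Set.Icc (0 : ℝ) 1, γ t ∈ Ω)
    (Ψ Ψ' : ℂ → (Fin n → ℂ))
    (hΨ : ∀ lam ∈ Ω, HasDerivAt Ψ (Ψ' lam) lam)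
    (hODE : ∀ lam ∈ Ω,
      (Matrix.diagonal u - lam • (1 : Matrix (Fin n) (Fin n) ℂ)) *ᵥ Ψ' lam
        = (A + 1) *ᵥ Ψ lam)
    (Y : ℂ → (Fin n → ℂ))
    (hY : ∀ z : ℂ, Y z = ∫ t in (0 : ℝ)..1, (Complex.exp (γ t * z) * γ' t) • Ψ (γ t))
    (z₀ : ℂ) (hz₀ : z₀ ≠ 0)
    (hbd : Complex.exp (γ 1 * z₀) •
          ((γ 1 • (1 : Matrix (Fin n) (Fin n) ℂ) - Matrix.diagonal u) *ᵥ Ψ (γ 1))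
        = Complex.exp (γ 0 * z₀) •
          ((γ 0 • (1 : Matrix (Fin n) (Fin n) ℂ) - Matrix.diagonal u) *ᵥ Ψ (γ 0))) :
    HasDerivAt Y ((Matrix.diagonal u + z₀⁻¹ • A) *ᵥ Y z₀) z₀ :=
  stmt15_general u A γ γ' hγ hγ' Ω hγΩ Ψ Ψ' hΨ hODE Y hY z₀ hz₀ hbd
end
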